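/- For an odd prime p, d'(He_p) = (2p+5)/(p^2 + 2p + 4), where d'(G) is the number of conjugacy classes of subgroups of G divided by the total number of subgroups of G. -/

import Mathlib

open Pointwise

/-- The number of subgroups of a group `G`, i.e. `|L(G)|`. -/
noncomputable def numSubgroups (G : Type*) [Group G] : ℕ := Nat.card (Subgroup G)

/-- The number of conjugacy classes of subgroups of `G`, i.e. `k'(G)`:
the number of orbits of the conjugation action of `G` on its subgroup lattice. -/
noncomputable def numConjClassesSubgroups (G : Type*) [Group G] : ℕ :=
  Nat.card (Quotient (MulAction.orbitRel (ConjAct G) (Subgroup G)))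

/-- `d'(G) = k'(G) / |L(G)|`. -/
noncomputable def dprime (G : Type*) [Group G] : ℚ :=
  (numConjClassesSubgroups G : ℚ) / (numSubgroups G : ℚ)

/-- The Heisenberg group modulo `p`: triples `(a,b,c)` with
`(a,b,c)*(a',b',c') = (a+a', b+b', c+c'+a·b')`. -/
def Heisenberg (p : ℕ) : Type := ZMod p × ZMod p × ZMod p

namespace Heisenberg

variable {p : ℕ}

instance : Mul (Heisenberg p) :=
  ⟨fun a b => (a.1 + b.1, a.2.1 + b.2.1, a.2.2 + b.2.2 + a.1 * b.2.1)⟩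

instance : One (Heisenberg p) := ⟨((0 : ZMod p), (0 : ZMod p), (0 : ZMod p))⟩

instance : Inv (Heisenberg p) := ⟨fun a => (-a.1, -a.2.1, -a.2.2 + a.1 * a.2.1)⟩

theorem mul_def (a b : Heisenberg p) :
    a * b = (a.1 + b.1, a.2.1 + b.2.1, a.2.2 + b.2.2 + a.1 * b.2.1) := rfl

theorem one_def : (1 : Heisenberg p) = ((0 : ZMod p), 0, 0) := rfl

theorem inv_def (a : Heisenberg p) : a⁻¹ = (-a.1, -a.2.1, -a.2.2 + a.1 * a.2.1) := rfl

instance : Group (Heisenberg p) where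
  mul_assoc a b c := by
    simp only [mul_def]
    erw [mul_def, mul_def]
    refine Prod.ext ?_ (Prod.ext ?_ ?_) <;> simp <;> ring
  one_mul a := by
    simp only [mul_def, one_def]
    erw [mul_def]
    refine Prod.ext ?_ (Prod.ext ?_ ?_) <;> simp
  mul_one a := by
    simp only [mul_def, one_def]
    erw [mul_def]
    refine Prod.ext ?_ (Prod.ext ?_ ?_) <;> simp
  inv_mul_cancel a := by
    simp only [mul_def, inv_def, one_def]
    erw [mul_def]
    refine Prod.ext ?_ (Prod.ext ?_ ?_) <;> simp

instance [NeZero p] : Finite (Heisenberg p) :=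
  inferInstanceAs (Finite (ZMod p × ZMod p × ZMod p))

end Heisenberg


namespace HeisAux

variable {p : ℕ}

@[simp] lemma mul_fst (x y : Heisenberg p) : (x * y).1 = x.1 + y.1 := rfl
@[simp] lemma mul_snd (x y : Heisenberg p) : (x * y).2.1 = x.2.1 + y.2.1 := rfl
@[simp] lemma mul_thd (x y : Heisenberg p) : (x * y).2.2 = x.2.2 + y.2.2 + x.1 * y.2.1 := rfl
@[simp] lemma inv_fst (x : Heisenberg p) : (x⁻¹).1 = -x.1 := rfl
@[simp] lemma inv_snd (x : Heisenberg p) : (x⁻¹).2.1 = -x.2.1 := rfl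
@[simp] lemma inv_thd (x : Heisenberg p) : (x⁻¹).2.2 = -x.2.2 + x.1 * x.2.1 := rfl
@[simp] lemma one_fst : ((1 : Heisenberg p)).1 = 0 := rfl
@[simp] lemma one_snd : ((1 : Heisenberg p)).2.1 = 0 := rfl
@[simp] lemma one_thd : ((1 : Heisenberg p)).2.2 = 0 := rfl

lemma heis_ext {x y : Heisenberg p} (h1 : x.1 = y.1) (h2 : x.2.1 = y.2.1)
    (h3 : x.2.2 = y.2.2) : x = y := Prod.ext h1 (Prod.ext h2 h3)

lemma pow_formula (h2 : (2 : ZMod p) * 2⁻¹ = 1) (x : Heisenberg p) (n : ℕ) :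
    x ^ n = ((n : ZMod p) * x.1, (n : ZMod p) * x.2.1,
      (n : ZMod p) * x.2.2 + (2 : ZMod p)⁻¹ * ((n : ZMod p) * ((n : ZMod p) - 1)) * x.1 * x.2.1) := by
  induction n with
  | zero => refine heis_ext ?_ ?_ ?_ <;> simp
  | succ n ih =>
      rw [pow_succ, ih]
      erw [Heisenberg.mul_def]
      refine heis_ext ?_ ?_ ?_ <;> simp <;> push_cast
      · ring
      · ring
      · linear_combination (-((n : ZMod p) * x.1 * x.2.1)) * h2

lemma zpow_formula (h2 : (2 : ZMod p) * 2⁻¹ = 1) (x : Heisenberg p) (k : ℤ) :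
    x ^ k = ((k : ZMod p) * x.1, (k : ZMod p) * x.2.1,
      (k : ZMod p) * x.2.2 + (2 : ZMod p)⁻¹ * ((k : ZMod p) * ((k : ZMod p) - 1)) * x.1 * x.2.1) := by
  cases k with
  | ofNat n => rw [Int.ofNat_eq_coe, zpow_natCast, pow_formula h2]; push_cast; ring_nf; rfl
  | negSucc n =>
      rw [zpow_negSucc, pow_formula h2]
      erw [Heisenberg.inv_def]
      refine heis_ext ?_ ?_ ?_ <;> simp [Int.cast_negSucc] <;> push_cast
      · ring
      · ring
      · linear_combination (-(((n : ZMod p) + 1) ^ 2 * x.1 * x.2.1)) * h2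

lemma conj_formula (g x : Heisenberg p) :
    g * x * g⁻¹ = (x.1, x.2.1, x.2.2 + g.1 * x.2.1 - g.2.1 * x.1) := by
  refine heis_ext ?_ ?_ ?_ <;> simp <;> ring

lemma comm_formula (x y : Heisenberg p) :
    x * y * x⁻¹ * y⁻¹ = ((0 : ZMod p), 0, x.1 * y.2.1 - x.2.1 * y.1) := by
  refine heis_ext ?_ ?_ ?_ <;> simp <;> ring


/-- The center: elements (0,0,*) -/
def Zc (p : ℕ) : Subgroup (Heisenberg p) where
  carrier := {x | x.1 = 0 ∧ x.2.1 = 0}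
  one_mem' := ⟨rfl, rfl⟩
  mul_mem' := by
    rintro x y ⟨h1, h2⟩ ⟨h3, h4⟩
    exact ⟨by simp [h1, h3], by simp [h2, h4]⟩
  inv_mem' := by
    rintro x ⟨h1, h2⟩
    exact ⟨by simp [h1], by simp [h2]⟩

@[simp] lemma mem_Zc {x : Heisenberg p} : x ∈ Zc p ↔ x.1 = 0 ∧ x.2.1 = 0 := Iff.rfl

/-- line condition for a direction `L` (some t : slope t through (1,t); none : vertical) -/
def lineCond : Option (ZMod p) → Heisenberg p → Prop
  | some t, x => x.2.1 = t * x.1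
  | none, x => x.1 = 0

/-- maximal subgroups: preimages of lines -/
def M (L : Option (ZMod p)) : Subgroup (Heisenberg p) where
  carrier := {x | lineCond L x}
  one_mem' := by cases L <;> simp [lineCond]
  mul_mem' := by
    cases L <;> intro x y hx hy <;> simp_all [lineCond] <;> ring
  inv_mem' := by
    cases L <;> intro x hx <;> simp_all [lineCond]

@[simp] lemma mem_M_some {t : ZMod p} {x : Heisenberg p} :
    x ∈ M (some t) ↔ x.2.1 = t * x.1 := Iff.rfl
@[simp] lemma mem_M_none {x : Heisenberg p} : x ∈ M (none : Option (ZMod p)) ↔ x.1 = 0 := Iff.rfl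

/-- generator of the complement subgroups -/
def gen : Option (ZMod p) → ZMod p → Heisenberg p
  | some t, s => ((1 : ZMod p), t, s)
  | none, s => ((0 : ZMod p), 1, s)

/-- non-central subgroups of order p -/
def Cg (L : Option (ZMod p)) (s : ZMod p) : Subgroup (Heisenberg p) :=
  Subgroup.zpowers (gen L s)

lemma gen_mem_Cg (L : Option (ZMod p)) (s : ZMod p) : gen L s ∈ Cg L s :=
  Subgroup.mem_zpowers _

lemma mem_Cg_some [NeZero p] (h2 : (2 : ZMod p) * 2⁻¹ = 1) {t s : ZMod p} {x : Heisenberg p} :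
    x ∈ Cg (some t) s ↔
      x.2.1 = t * x.1 ∧ x.2.2 = s * x.1 + (2 : ZMod p)⁻¹ * (x.1 * (x.1 - 1)) * t := by
  rw [Cg, Subgroup.mem_zpowers_iff]
  constructor
  · rintro ⟨k, rfl⟩
    rw [zpow_formula h2]
    simp [gen]
    constructor <;> ring
  · rintro ⟨ha, hb⟩
    refine ⟨(x.1.val : ℤ), ?_⟩
    rw [zpow_formula h2]
    have hv : ((x.1.val : ℤ) : ZMod p) = x.1 := by
      push_cast
      exact ZMod.natCast_rightInverse x.1
    refine heis_ext ?_ ?_ ?_ <;> simp [gen, hv]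
    · linear_combination -ha
    · rw [hb]; ring

lemma mem_Cg_none [NeZero p] (h2 : (2 : ZMod p) * 2⁻¹ = 1) {s : ZMod p} {x : Heisenberg p} :
    x ∈ Cg (none : Option (ZMod p)) s ↔ x.1 = 0 ∧ x.2.2 = s * x.2.1 := by
  rw [Cg, Subgroup.mem_zpowers_iff]
  constructor
  · rintro ⟨k, rfl⟩
    rw [zpow_formula h2]
    simp [gen]
    ring
  · rintro ⟨ha, hb⟩
    refine ⟨(x.2.1.val : ℤ), ?_⟩
    rw [zpow_formula h2]
    have hv : ((x.2.1.val : ℤ) : ZMod p) = x.2.1 := by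
      push_cast
      exact ZMod.natCast_rightInverse x.2.1
    refine heis_ext ?_ ?_ ?_ <;> simp [gen, hv]
    · exact ha.symm
    · rw [hb]; ring

theorem classify (hp : p.Prime) (h2 : (2 : ZMod p) * 2⁻¹ = 1) (H : Subgroup (Heisenberg p)) :
    H = ⊥ ∨ H = ⊤ ∨ H = Zc p ∨ (∃ L, H = M L) ∨ (∃ L s, H = Cg L s) := by
  haveI := Fact.mk hp
  -- central saturation
  have hZsat : ∀ z : Heisenberg p, z ∈ H → z.1 = 0 → z.2.1 = 0 → z.2.2 ≠ 0 →
      ∀ d : ZMod p, (((0 : ZMod p), (0 : ZMod p), d) : Heisenberg p) ∈ H := by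
    intro z hz e1 e2 e3 d
    have key : z ^ ((d / z.2.2 : ZMod p)).val = (((0 : ZMod p), (0 : ZMod p), d) : Heisenberg p) := by
      rw [pow_formula h2]
      have hv : (((d / z.2.2 : ZMod p)).val : ZMod p) = d / z.2.2 :=
        ZMod.natCast_rightInverse _
      refine heis_ext ?_ ?_ ?_ <;> simp [e1, e2, hv]
      exact div_mul_cancel₀ d e3
    exact key ▸ pow_mem hz _
  have hmem12 : ∀ x y : Heisenberg p, x ∈ H →
      (∀ d : ZMod p, (((0 : ZMod p), (0 : ZMod p), d) : Heisenberg p) ∈ H) →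
      y.1 = x.1 → y.2.1 = x.2.1 → y ∈ H := by
    intro x y hx hzf e1 e2
    have h1 : y * x⁻¹ = (((0 : ZMod p), (0 : ZMod p), (y * x⁻¹).2.2) : Heisenberg p) := by
      refine heis_ext ?_ ?_ rfl <;> simp [e1, e2]
    have h3 : y * x⁻¹ ∈ H := by rw [h1]; exact hzf _
    have h4 := mul_mem h3 hx
    rwa [inv_mul_cancel_right] at h4
  by_cases hcen : ∀ x ∈ H, x.1 = 0 ∧ x.2.1 = 0
  · by_cases htriv : ∀ x ∈ H, x = 1
    · left
      exact (Subgroup.eq_bot_iff_forall H).mpr htriv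
    · right; right; left
      push_neg at htriv
      obtain ⟨z, hz, hz1⟩ := htriv
      obtain ⟨e1, e2⟩ := hcen z hz
      have e3 : z.2.2 ≠ 0 := by
        intro h
        exact hz1 (heis_ext (by simpa using e1) (by simpa using e2) (by simpa using h))
      have hzf := hZsat z hz e1 e2 e3
      ext y
      simp only [mem_Zc]
      constructor
      · intro hy; exact hcen y hy
      · rintro ⟨f1, f2⟩
        have hy : y = (((0 : ZMod p), (0 : ZMod p), y.2.2) : Heisenberg p) := heis_ext f1 f2 rfl
        rw [hy]; exact hzf _
  · push_neg at hcen
    obtain ⟨x, hx, hx12⟩ := hcen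
    by_cases hdep : ∀ y ∈ H, x.1 * y.2.1 = x.2.1 * y.1
    · by_cases hZin : ∀ z ∈ H, z.1 = 0 → z.2.1 = 0 → z = 1
      · -- cyclic case : H = Cg L s
        right; right; right; right
        by_cases hx1 : x.1 = 0
        · -- vertical line
          have hx2 : x.2.1 ≠ 0 := fun h => hx12 hx1 h
          have hval : (((x.2.1⁻¹ : ZMod p)).val : ZMod p) = x.2.1⁻¹ :=
            ZMod.natCast_rightInverse _
          set g := x ^ ((x.2.1⁻¹ : ZMod p)).val with hg
          have hgH : g ∈ H := pow_mem hx _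
          have hg1 : g.1 = 0 := by rw [hg, pow_formula h2]; simp [hx1]
          have hg2 : g.2.1 = 1 := by
            rw [hg, pow_formula h2]
            simpa [hval] using inv_mul_cancel₀ hx2
          refine ⟨none, g.2.2, ?_⟩
          have hgen : gen (none : Option (ZMod p)) g.2.2 = g := heis_ext hg1.symm hg2.symm rfl
          rw [Cg, hgen]
          apply le_antisymm
          · intro y hy
            have hd := hdep y hy
            rw [hx1, zero_mul] at hd
            have hy1 : y.1 = 0 := by
              rcases mul_eq_zero.mp hd.symm with h | h
              · exact absurd h hx2
              · exact h
            have hval2 : ((y.2.1.val : ℕ) : ZMod p) = y.2.1 := ZMod.natCast_rightInverse _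
            set w := g ^ (y.2.1.val) with hw
            have hw1 : w.1 = 0 := by rw [hw, pow_formula h2, hg1]; simp
            have hw2 : w.2.1 = y.2.1 := by rw [hw, pow_formula h2, hg2]; simp [hval2]
            have hywH : y * w⁻¹ ∈ H := mul_mem hy (inv_mem (pow_mem hgH _))
            have hyw : y * w⁻¹ = 1 := by
              apply hZin _ hywH
              · simp [hy1, hw1]
              · simp [hw2]
            have hyweq : y = w := by
              have := mul_inv_eq_one.mp hyw
              exact this
            rw [hyweq, hw]
            exact pow_mem (Subgroup.mem_zpowers g) _
          · exact (Subgroup.zpowers_le).mpr hgH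
        · -- slanted line
          have hval : (((x.1⁻¹ : ZMod p)).val : ZMod p) = x.1⁻¹ := ZMod.natCast_rightInverse _
          set g := x ^ ((x.1⁻¹ : ZMod p)).val with hg
          have hgH : g ∈ H := pow_mem hx _
          have hg1 : g.1 = 1 := by
            rw [hg, pow_formula h2]
            simpa [hval] using inv_mul_cancel₀ hx1
          have hg2 : g.2.1 = x.1⁻¹ * x.2.1 := by rw [hg, pow_formula h2]; simp [hval]
          refine ⟨some g.2.1, g.2.2, ?_⟩
          have hgen : gen (some g.2.1) g.2.2 = g := heis_ext hg1.symm rfl rfl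
          rw [Cg, hgen]
          apply le_antisymm
          · intro y hy
            have hd := hdep y hy
            have hval2 : ((y.1.val : ℕ) : ZMod p) = y.1 := ZMod.natCast_rightInverse _
            set w := g ^ (y.1.val) with hw
            have hw1 : w.1 = y.1 := by rw [hw, pow_formula h2, hg1]; simp [hval2]
            have hw2 : w.2.1 = y.2.1 := by
              rw [hw, pow_formula h2, hg2, hval2]
              field_simp
              linear_combination -hd
            have hywH : y * w⁻¹ ∈ H := mul_mem hy (inv_mem (pow_mem hgH _))
            have hyw : y * w⁻¹ = 1 := by
              apply hZin _ hywH
              · simp [hw1]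
              · simp [hw2]
            rw [mul_inv_eq_one.mp hyw, hw]
            exact pow_mem (Subgroup.mem_zpowers g) _
          · exact (Subgroup.zpowers_le).mpr hgH
      · -- contains the center : H = M L
        push_neg at hZin
        obtain ⟨z, hz, e1, e2, hzne⟩ := hZin
        have e3 : z.2.2 ≠ 0 := by
          intro h
          exact hzne (heis_ext (by simpa using e1) (by simpa using e2) (by simpa using h))
        have hzf := hZsat z hz e1 e2 e3
        right; right; right; left
        by_cases hx1 : x.1 = 0
        · have hx2 : x.2.1 ≠ 0 := fun h => hx12 hx1 h
          refine ⟨none, ?_⟩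
          ext y
          simp only [mem_M_none]
          constructor
          · intro hy
            have hd := hdep y hy
            rw [hx1, zero_mul] at hd
            rcases mul_eq_zero.mp hd.symm with h | h
            · exact absurd h hx2
            · exact h
          · intro hy1
            have hval2 : (((y.2.1 / x.2.1 : ZMod p)).val : ZMod p) = y.2.1 / x.2.1 :=
              ZMod.natCast_rightInverse _
            set w := x ^ ((y.2.1 / x.2.1 : ZMod p)).val with hw
            refine hmem12 w y (pow_mem hx _) hzf ?_ ?_
            · rw [hw, pow_formula h2]; simp [hx1, hy1]
            · rw [hw, pow_formula h2]
              simp only [hval2]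
              exact (div_mul_cancel₀ y.2.1 hx2).symm
        · refine ⟨some (x.2.1 / x.1), ?_⟩
          ext y
          simp only [mem_M_some]
          constructor
          · intro hy
            have hd := hdep y hy
            field_simp
            linear_combination hd
          · intro hy2
            have hval2 : (((y.1 / x.1 : ZMod p)).val : ZMod p) = y.1 / x.1 :=
              ZMod.natCast_rightInverse _
            set w := x ^ ((y.1 / x.1 : ZMod p)).val with hw
            refine hmem12 w y (pow_mem hx _) hzf ?_ ?_
            · rw [hw, pow_formula h2]
              simp only [hval2]
              exact (div_mul_cancel₀ y.1 hx1).symm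
            · rw [hw, pow_formula h2]
              simp only [hval2]
              rw [hy2]
              field_simp
    · -- independent pair : H = ⊤
      push_neg at hdep
      obtain ⟨y, hy, hxy⟩ := hdep
      right; left
      have hc : x * y * x⁻¹ * y⁻¹ ∈ H :=
        mul_mem (mul_mem (mul_mem hx hy) (inv_mem hx)) (inv_mem hy)
      rw [comm_formula] at hc
      have hD : x.1 * y.2.1 - x.2.1 * y.1 ≠ 0 := sub_ne_zero.mpr hxy
      have hzf : ∀ d : ZMod p, (((0 : ZMod p), (0 : ZMod p), d) : Heisenberg p) ∈ H :=
        hZsat _ hc rfl rfl hD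
      rw [Subgroup.eq_top_iff']
      intro v
      set D := x.1 * y.2.1 - x.2.1 * y.1 with hDdef
      set a := (v.1 * y.2.1 - v.2.1 * y.1) / D with ha
      set b := (x.1 * v.2.1 - x.2.1 * v.1) / D with hb
      have hav : ((a.val : ℕ) : ZMod p) = a := ZMod.natCast_rightInverse _
      have hbv : ((b.val : ℕ) : ZMod p) = b := ZMod.natCast_rightInverse _
      set w := x ^ a.val * y ^ b.val with hw
      have hwH : w ∈ H := mul_mem (pow_mem hx _) (pow_mem hy _)
      have hw1 : w.1 = v.1 := by
        rw [hw, mul_fst, pow_formula h2, pow_formula h2]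
        simp only [hav, hbv]
        show a * x.1 + b * y.1 = v.1
        rw [ha, hb, div_mul_eq_mul_div, div_mul_eq_mul_div, ← add_div, div_eq_iff hD, hDdef]
        ring
      have hw2 : w.2.1 = v.2.1 := by
        rw [hw, mul_snd, pow_formula h2, pow_formula h2]
        simp only [hav, hbv]
        show a * x.2.1 + b * y.2.1 = v.2.1
        rw [ha, hb, div_mul_eq_mul_div, div_mul_eq_mul_div, ← add_div, div_eq_iff hD, hDdef]
        ring
      exact hmem12 w v hwH hzf hw1.symm hw2.symm

/-- element constructor -/
def el (a b c : ZMod p) : Heisenberg p := (a, b, c)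

section Distinct

lemma bot_ne_top (hp : p.Prime) : (⊥ : Subgroup (Heisenberg p)) ≠ ⊤ := by
  haveI := Fact.mk hp
  intro h
  have hm : (el 0 0 1) ∈ (⊥ : Subgroup (Heisenberg p)) :=
    (SetLike.ext_iff.mp h _).mpr trivial
  rw [Subgroup.mem_bot] at hm
  exact one_ne_zero (congrArg (fun v : Heisenberg p => v.2.2) hm)

lemma bot_ne_Zc (hp : p.Prime) : (⊥ : Subgroup (Heisenberg p)) ≠ Zc p := by
  haveI := Fact.mk hp
  intro h
  have hm : (el 0 0 1) ∈ (⊥ : Subgroup (Heisenberg p)) :=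
    (SetLike.ext_iff.mp h _).mpr ⟨rfl, rfl⟩
  rw [Subgroup.mem_bot] at hm
  exact one_ne_zero (congrArg (fun v : Heisenberg p => v.2.2) hm)

lemma bot_ne_M (hp : p.Prime) (L : Option (ZMod p)) :
    (⊥ : Subgroup (Heisenberg p)) ≠ M L := by
  haveI := Fact.mk hp
  intro h
  have hw : (el 0 0 1) ∈ M L := by
    cases L with
    | some t => exact (mul_zero t).symm
    | none => exact rfl
  have hm : (el 0 0 1) ∈ (⊥ : Subgroup (Heisenberg p)) :=
    (SetLike.ext_iff.mp h _).mpr hw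
  rw [Subgroup.mem_bot] at hm
  exact one_ne_zero (congrArg (fun v : Heisenberg p => v.2.2) hm)

lemma bot_ne_Cg (hp : p.Prime) (L : Option (ZMod p)) (s : ZMod p) :
    (⊥ : Subgroup (Heisenberg p)) ≠ Cg L s := by
  haveI := Fact.mk hp
  intro h
  have hm : gen L s ∈ (⊥ : Subgroup (Heisenberg p)) :=
    (SetLike.ext_iff.mp h _).mpr (gen_mem_Cg L s)
  rw [Subgroup.mem_bot] at hm
  cases L with
  | some t => exact one_ne_zero (congrArg (fun v : Heisenberg p => v.1) hm)
  | none => exact one_ne_zero (congrArg (fun v : Heisenberg p => v.2.1) hm)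

lemma top_ne_Zc (hp : p.Prime) : (⊤ : Subgroup (Heisenberg p)) ≠ Zc p := by
  haveI := Fact.mk hp
  intro h
  have hm : (el 1 0 0) ∈ Zc p :=
    (SetLike.ext_iff.mp h _).mp trivial
  exact one_ne_zero hm.1

lemma top_ne_M (hp : p.Prime) (L : Option (ZMod p)) :
    (⊤ : Subgroup (Heisenberg p)) ≠ M L := by
  haveI := Fact.mk hp
  intro h
  cases L with
  | some t =>
      have hm : (el 0 1 0) ∈ M (some t) :=
        (SetLike.ext_iff.mp h _).mp trivial
      have h3 : (1 : ZMod p) = t * 0 := hm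
      exact one_ne_zero (h3.trans (mul_zero t))
  | none =>
      have hm : (el 1 0 0) ∈ M none :=
        (SetLike.ext_iff.mp h _).mp trivial
      exact one_ne_zero hm

lemma top_ne_Cg (hp : p.Prime) (h2 : (2 : ZMod p) * 2⁻¹ = 1) (L : Option (ZMod p)) (s : ZMod p) :
    (⊤ : Subgroup (Heisenberg p)) ≠ Cg L s := by
  haveI := Fact.mk hp
  intro h
  cases L with
  | some t =>
      have hm : (el 0 1 0) ∈ Cg (some t) s :=
        (SetLike.ext_iff.mp h _).mp trivial
      rw [mem_Cg_some h2] at hm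
      have h3 : (1 : ZMod p) = t * 0 := hm.1
      exact one_ne_zero (h3.trans (mul_zero t))
  | none =>
      have hm : (el 1 0 0) ∈ Cg none s :=
        (SetLike.ext_iff.mp h _).mp trivial
      rw [mem_Cg_none h2] at hm
      exact one_ne_zero hm.1

lemma Zc_ne_M (hp : p.Prime) (L : Option (ZMod p)) : Zc p ≠ M L := by
  haveI := Fact.mk hp
  intro h
  cases L with
  | some t =>
      have hm : (el 1 t 0) ∈ Zc p :=
        (SetLike.ext_iff.mp h _).mpr (mul_one t).symm
      exact one_ne_zero hm.1
  | none =>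
      have hm : (el 0 1 0) ∈ Zc p :=
        (SetLike.ext_iff.mp h _).mpr rfl
      exact one_ne_zero hm.2

lemma Zc_ne_Cg (hp : p.Prime) (h2 : (2 : ZMod p) * 2⁻¹ = 1) (L : Option (ZMod p)) (s : ZMod p) :
    Zc p ≠ Cg L s := by
  haveI := Fact.mk hp
  intro h
  have hm : (el 0 0 1) ∈ Cg L s :=
    (SetLike.ext_iff.mp h _).mp ⟨rfl, rfl⟩
  cases L with
  | some t =>
      rw [mem_Cg_some h2] at hm
      have h3 : (1 : ZMod p) = s * 0 + 2⁻¹ * (0 * (0 - 1)) * t := hm.2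
      simp at h3
  | none =>
      rw [mem_Cg_none h2] at hm
      have h3 : (1 : ZMod p) = s * 0 := hm.2
      simp at h3

lemma M_ne_Cg (hp : p.Prime) (h2 : (2 : ZMod p) * 2⁻¹ = 1) (L L' : Option (ZMod p))
    (s : ZMod p) : M L ≠ Cg L' s := by
  haveI := Fact.mk hp
  intro h
  have hw : (el 0 0 1) ∈ M L := by
    cases L with
    | some t => exact (mul_zero t).symm
    | none => exact rfl
  have hm : (el 0 0 1) ∈ Cg L' s :=
    (SetLike.ext_iff.mp h _).mp hw
  cases L' with
  | some t =>
      rw [mem_Cg_some h2] at hm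
      have h3 : (1 : ZMod p) = s * 0 + 2⁻¹ * (0 * (0 - 1)) * t := hm.2
      simp at h3
  | none =>
      rw [mem_Cg_none h2] at hm
      have h3 : (1 : ZMod p) = s * 0 := hm.2
      simp at h3

lemma M_inj (hp : p.Prime) {L L' : Option (ZMod p)} (h : M (p := p) L = M L') : L = L' := by
  haveI := Fact.mk hp
  cases L with
  | some t =>
      cases L' with
      | some t' =>
          have hm : (el 1 t 0) ∈ M (some t') :=
            (SetLike.ext_iff.mp h _).mp (mul_one t).symm
          have h3 : t = t' * 1 := hm
          rw [mul_one] at h3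
          rw [h3]
      | none =>
          have hm : (el 1 t 0) ∈ M none :=
            (SetLike.ext_iff.mp h _).mp (mul_one t).symm
          exact absurd hm one_ne_zero
  | none =>
      cases L' with
      | some t' =>
          have hm : (el 0 1 0) ∈ M (some t') :=
            (SetLike.ext_iff.mp h _).mp rfl
          have h3 : (1 : ZMod p) = t' * 0 := hm
          exact absurd (h3.trans (mul_zero t')) one_ne_zero
      | none => rfl

lemma Cg_inj (hp : p.Prime) (h2 : (2 : ZMod p) * 2⁻¹ = 1) {L L' : Option (ZMod p)}
    {s s' : ZMod p} (h : Cg (p := p) L s = Cg L' s') : L = L' ∧ s = s' := by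
  haveI := Fact.mk hp
  have hm : gen L s ∈ Cg L' s' := (SetLike.ext_iff.mp h _).mp (gen_mem_Cg L s)
  cases L with
  | some t =>
      cases L' with
      | some t' =>
          rw [mem_Cg_some h2] at hm
          have h3 : t = t' * 1 := hm.1
          have h4 : s = s' * 1 + 2⁻¹ * (1 * (1 - 1)) * t' := hm.2
          rw [mul_one] at h3
          simp at h4
          exact ⟨by rw [h3], h4⟩
      | none =>
          rw [mem_Cg_none h2] at hm
          exact absurd hm.1 one_ne_zero
  | none =>
      cases L' with
      | some t' =>
          rw [mem_Cg_some h2] at hm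
          have h3 : (1 : ZMod p) = t' * 0 := hm.1
          exact absurd (h3.trans (mul_zero t')) one_ne_zero
      | none =>
          rw [mem_Cg_none h2] at hm
          have h4 : s = s' * 1 := hm.2
          rw [mul_one] at h4
          exact ⟨rfl, h4⟩

end Distinct

/-- index type for the subgroups -/
abbrev Idx (p : ℕ) : Type :=
  (Unit ⊕ Unit ⊕ Unit) ⊕ (Option (ZMod p)) ⊕ (Option (ZMod p) × ZMod p)

/-- the subgroup associated to an index -/
def cls : Idx p → Subgroup (Heisenberg p)
  | .inl (.inl _) => ⊥
  | .inl (.inr (.inl _)) => ⊤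
  | .inl (.inr (.inr _)) => Zc p
  | .inr (.inl L) => M L
  | .inr (.inr (L, s)) => Cg L s

lemma cls_bijective (hp : p.Prime) (h2 : (2 : ZMod p) * 2⁻¹ = 1) :
    Function.Bijective (cls (p := p)) := by
  constructor
  · rintro ((⟨⟩ | ⟨⟩ | ⟨⟩) | L | ⟨L, s⟩) ((⟨⟩ | ⟨⟩ | ⟨⟩) | L' | ⟨L', s'⟩) h
    · rfl
    · exact absurd h (bot_ne_top hp)
    · exact absurd h (bot_ne_Zc hp)
    · exact absurd h (bot_ne_M hp L')
    · exact absurd h (bot_ne_Cg hp L' s')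
    · exact absurd h.symm (bot_ne_top hp)
    · rfl
    · exact absurd h (top_ne_Zc hp)
    · exact absurd h (top_ne_M hp L')
    · exact absurd h (top_ne_Cg hp h2 L' s')
    · exact absurd h.symm (bot_ne_Zc hp)
    · exact absurd h.symm (top_ne_Zc hp)
    · rfl
    · exact absurd h (Zc_ne_M hp L')
    · exact absurd h (Zc_ne_Cg hp h2 L' s')
    · exact absurd h.symm (bot_ne_M hp L)
    · exact absurd h.symm (top_ne_M hp L)
    · exact absurd h.symm (Zc_ne_M hp L)
    · obtain rfl := M_inj hp h; rfl
    · exact absurd h (M_ne_Cg hp h2 L L' s')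
    · exact absurd h.symm (bot_ne_Cg hp L s)
    · exact absurd h.symm (top_ne_Cg hp h2 L s)
    · exact absurd h.symm (Zc_ne_Cg hp h2 L s)
    · exact absurd h.symm (M_ne_Cg hp h2 L' L s)
    · obtain ⟨rfl, rfl⟩ := Cg_inj hp h2 h; rfl
  · intro H
    rcases classify hp h2 H with h | h | h | ⟨L, h⟩ | ⟨L, s, h⟩
    · exact ⟨.inl (.inl ()), h.symm⟩
    · exact ⟨.inl (.inr (.inl ())), h.symm⟩
    · exact ⟨.inl (.inr (.inr ())), h.symm⟩
    · exact ⟨.inr (.inl L), h.symm⟩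
    · exact ⟨.inr (.inr (L, s)), h.symm⟩

lemma card_subgroups (hp : p.Prime) (h2 : (2 : ZMod p) * 2⁻¹ = 1) :
    Nat.card (Subgroup (Heisenberg p)) = p ^ 2 + 2 * p + 4 := by
  haveI := Fact.mk hp
  rw [← Nat.card_eq_of_bijective _ (cls_bijective hp h2)]
  simp [Nat.card_sum, Nat.card_prod, Nat.card_unique, Finite.card_option, Nat.card_zmod]
  ring

section Orbits

open MulAction

lemma mem_smul_iff (g : ConjAct (Heisenberg p)) (H : Subgroup (Heisenberg p))
    (x : Heisenberg p) :
    x ∈ g • H ↔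
      el x.1 x.2.1 (x.2.2 - (ConjAct.ofConjAct g).1 * x.2.1 + (ConjAct.ofConjAct g).2.1 * x.1)
        ∈ H := by
  rw [Subgroup.mem_pointwise_smul_iff_inv_smul_mem]
  have hgx : g⁻¹ • x =
      el x.1 x.2.1 (x.2.2 - (ConjAct.ofConjAct g).1 * x.2.1 + (ConjAct.ofConjAct g).2.1 * x.1) := by
    rw [ConjAct.smul_def, map_inv, conj_formula]
    refine heis_ext rfl rfl ?_
    simp [el]
    ring
  rw [hgx]

lemma smul_Zc (g : ConjAct (Heisenberg p)) : g • Zc p = Zc p := by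
  ext x
  rw [mem_smul_iff]
  exact Iff.rfl

lemma smul_M (g : ConjAct (Heisenberg p)) (L : Option (ZMod p)) : g • M L = M L := by
  ext x
  rw [mem_smul_iff]
  cases L <;> exact Iff.rfl

lemma smul_top (g : ConjAct (Heisenberg p)) :
    g • (⊤ : Subgroup (Heisenberg p)) = ⊤ := by
  ext x
  rw [mem_smul_iff]
  exact Iff.rfl

lemma smul_Cg_some (hp : p.Prime) (h2 : (2 : ZMod p) * 2⁻¹ = 1)
    (g : ConjAct (Heisenberg p)) (t s : ZMod p) :
    g • Cg (some t) s
      = Cg (some t) (s + (ConjAct.ofConjAct g).1 * t - (ConjAct.ofConjAct g).2.1) := by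
  haveI := Fact.mk hp
  ext x
  rw [mem_smul_iff, mem_Cg_some h2, mem_Cg_some h2]
  set a := (ConjAct.ofConjAct g).1
  set b := (ConjAct.ofConjAct g).2.1
  show x.2.1 = t * x.1 ∧ x.2.2 - a * x.2.1 + b * x.1 = s * x.1 + 2⁻¹ * (x.1 * (x.1 - 1)) * t ↔
    x.2.1 = t * x.1 ∧ x.2.2 = (s + a * t - b) * x.1 + 2⁻¹ * (x.1 * (x.1 - 1)) * t
  constructor
  · rintro ⟨h1, hh⟩
    exact ⟨h1, by linear_combination hh + a * h1⟩
  · rintro ⟨h1, hh⟩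
    exact ⟨h1, by linear_combination hh - a * h1⟩

lemma smul_Cg_none (hp : p.Prime) (h2 : (2 : ZMod p) * 2⁻¹ = 1)
    (g : ConjAct (Heisenberg p)) (s : ZMod p) :
    g • Cg (none : Option (ZMod p)) s = Cg none (s + (ConjAct.ofConjAct g).1) := by
  haveI := Fact.mk hp
  ext x
  rw [mem_smul_iff, mem_Cg_none h2, mem_Cg_none h2]
  set a := (ConjAct.ofConjAct g).1
  set b := (ConjAct.ofConjAct g).2.1
  show x.1 = 0 ∧ x.2.2 - a * x.2.1 + b * x.1 = s * x.2.1 ↔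
    x.1 = 0 ∧ x.2.2 = (s + a) * x.2.1
  constructor
  · rintro ⟨h1, hh⟩
    exact ⟨h1, by linear_combination hh - b * h1⟩
  · rintro ⟨h1, hh⟩
    exact ⟨h1, by linear_combination hh + b * h1⟩

/-- index type for conjugacy classes of subgroups -/
abbrev Idx2 (p : ℕ) : Type :=
  (Unit ⊕ Unit ⊕ Unit) ⊕ (Option (ZMod p)) ⊕ (Option (ZMod p))

def emb : Idx2 p → Idx p
  | .inl u => .inl u
  | .inr (.inl L) => .inr (.inl L)
  | .inr (.inr L) => .inr (.inr (L, 0))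

def projIdx : Idx p → Idx2 p
  | .inl u => .inl u
  | .inr (.inl L) => .inr (.inl L)
  | .inr (.inr (L, _)) => .inr (.inr L)

lemma projIdx_emb (i : Idx2 p) : projIdx (emb i) = i := by
  rcases i with u | L | L <;> rfl

lemma smul_cls (hp : p.Prime) (h2 : (2 : ZMod p) * 2⁻¹ = 1)
    (g : ConjAct (Heisenberg p)) (i : Idx p) :
    ∃ i' : Idx p, g • cls i = cls i' ∧ projIdx i' = projIdx i := by
  rcases i with (u | u | u) | L | ⟨L, s⟩
  · exact ⟨.inl (.inl u), Subgroup.smul_bot g, rfl⟩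
  · exact ⟨.inl (.inr (.inl u)), smul_top g, rfl⟩
  · exact ⟨.inl (.inr (.inr u)), smul_Zc g, rfl⟩
  · exact ⟨.inr (.inl L), smul_M g L, rfl⟩
  · cases L with
    | some t =>
        exact ⟨.inr (.inr (some t,
          s + (ConjAct.ofConjAct g).1 * t - (ConjAct.ofConjAct g).2.1)),
          smul_Cg_some hp h2 g t s, rfl⟩
    | none =>
        exact ⟨.inr (.inr (none, s + (ConjAct.ofConjAct g).1)),
          smul_Cg_none hp h2 g s, rfl⟩

lemma reach (hp : p.Prime) (h2 : (2 : ZMod p) * 2⁻¹ = 1) (i : Idx p) :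
    ∃ g : ConjAct (Heisenberg p), g • cls (emb (projIdx i)) = cls i := by
  rcases i with (u | u | u) | L | ⟨L, s⟩
  · exact ⟨1, one_smul _ _⟩
  · exact ⟨1, one_smul _ _⟩
  · exact ⟨1, one_smul _ _⟩
  · exact ⟨1, one_smul _ _⟩
  · cases L with
    | some t =>
        refine ⟨ConjAct.toConjAct (el 0 (-s) 0), ?_⟩
        show ConjAct.toConjAct (el 0 (-s) 0) • Cg (some t) 0 = Cg (some t) s
        rw [smul_Cg_some hp h2]
        congr 1
        erw [ConjAct.ofConjAct_toConjAct]
        simp [el]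
    | none =>
        refine ⟨ConjAct.toConjAct (el s 0 0), ?_⟩
        show ConjAct.toConjAct (el s 0 0) • Cg (none : Option (ZMod p)) 0 = Cg none s
        rw [smul_Cg_none hp h2]
        congr 1
        erw [ConjAct.ofConjAct_toConjAct]
        simp [el]

noncomputable def cls2 (i : Idx2 p) :
    Quotient (MulAction.orbitRel (ConjAct (Heisenberg p)) (Subgroup (Heisenberg p))) :=
  Quotient.mk (MulAction.orbitRel (ConjAct (Heisenberg p)) (Subgroup (Heisenberg p)))
    (cls (emb i))

lemma cls2_bijective (hp : p.Prime) (h2 : (2 : ZMod p) * 2⁻¹ = 1) :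
    Function.Bijective (cls2 (p := p)) := by
  constructor
  · intro i j h
    have hrel : cls (emb i) ∈ MulAction.orbit (ConjAct (Heisenberg p)) (cls (emb j)) :=
      Quotient.exact h
    obtain ⟨g, hg⟩ := MulAction.mem_orbit_iff.mp hrel
    obtain ⟨i', hi', hproj⟩ := smul_cls hp h2 g (emb j)
    rw [hi'] at hg
    have hij := (cls_bijective hp h2).1 hg
    calc i = projIdx (emb i) := (projIdx_emb i).symm
      _ = projIdx i' := by rw [hij]
      _ = projIdx (emb j) := hproj
      _ = j := projIdx_emb j
  · intro q
    obtain ⟨H, rfl⟩ := Quotient.exists_rep q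
    obtain ⟨i, hi⟩ := (cls_bijective hp h2).2 H
    obtain ⟨g, hg⟩ := reach hp h2 i
    refine ⟨projIdx i, ?_⟩
    rw [← hi]
    refine (Quotient.sound ?_).symm
    exact MulAction.mem_orbit_iff.mpr ⟨g, hg⟩

lemma card_conjClasses (hp : p.Prime) (h2 : (2 : ZMod p) * 2⁻¹ = 1) :
    Nat.card
      (Quotient (MulAction.orbitRel (ConjAct (Heisenberg p)) (Subgroup (Heisenberg p))))
      = 2 * p + 5 := by
  haveI := Fact.mk hp
  rw [← Nat.card_eq_of_bijective _ (cls2_bijective hp h2)]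
  simp [Nat.card_sum, Nat.card_unique, Finite.card_option, Nat.card_zmod]
  ring

end Orbits

end HeisAux

/-- For an odd prime `p`, `d'(He_p) = (2p + 5) / (p^2 + 2p + 4)`. -/
theorem heisenberg_dprime (p : ℕ) (hp : p.Prime) (hodd : Odd p) :
    dprime (Heisenberg p) = (2 * p + 5 : ℚ) / (p ^ 2 + 2 * p + 4 : ℚ) := by
  haveI := Fact.mk hp
  have hp2 : p ≠ 2 := by
    rintro rfl
    simp [Nat.odd_iff] at hodd
  have h2ne : (2 : ZMod p) ≠ 0 := by
    have : ((2 : ℕ) : ZMod p) ≠ 0 := by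
      rw [Ne, ZMod.natCast_eq_zero_iff]
      intro hdvd
      rcases (Nat.prime_dvd_prime_iff_eq hp Nat.prime_two).mp hdvd with h
      exact hp2 h
    simpa using this
  have h2 : (2 : ZMod p) * 2⁻¹ = 1 := mul_inv_cancel₀ h2ne
  unfold dprime numSubgroups numConjClassesSubgroups
  rw [HeisAux.card_subgroups hp h2, HeisAux.card_conjClasses hp h2]
  push_cast
  ring
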